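/- Let g_j : ℝ^n → ℝ, j ∈ J, be quasidifferentiable at x̄ with quasidifferentials [A_j, B_j], let A ⊂ ℝ^n be closed convex with x̄ ∈ A, and let f_0 be quasidifferentiable at x̄ with quasidifferential [A_0, B_0]. Suppose x̄ is a local minimizer of f_0 subject to g_j(x) ≤ 0 (j ∈ J) and x ∈ A, and suppose z_j* ∈ B_j (for j with g_j(x̄)=0) satisfy 0 ∉ conv{A_j + z_j* : g_j(x̄) = 0} + N_A(x̄). Then for every y_0* ∈ B_0 and every choice z_j* ∈ B_j for j with g_j(x̄) < 0, there exist λ_j ≥ 0 with λ_j g_j(x̄) = 0 for all j and 0 ∈ A_0 + y_0* + Σ_j λ_j (A_j + z_j*) + N_A(x̄). -/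

import Mathlib

open Filter RealInnerProductSpace Pointwise

variable {n : ℕ}

/-- `f` has one-sided directional derivative `d` at `x` in direction `v`. -/
def HasDirDeriv (f : EuclideanSpace ℝ (Fin n) → ℝ) (x v : EuclideanSpace ℝ (Fin n))
    (d : ℝ) : Prop :=
  Tendsto (fun α : ℝ => (f (x + α • v) - f x) / α) (nhdsWithin 0 (Set.Ioi 0)) (nhds d)

/-- `[A, B]` is a quasidifferential of `f` at `x`. -/
def IsQuasidiff (f : EuclideanSpace ℝ (Fin n) → ℝ) (x : EuclideanSpace ℝ (Fin n))
    (A B : Set (EuclideanSpace ℝ (Fin n))) : Prop :=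
  ∀ v, ∃ d₁ d₂ : ℝ,
    IsGreatest ((fun a => ⟪a, v⟫) '' A) d₁ ∧
    IsLeast ((fun b => ⟪b, v⟫) '' B) d₂ ∧
    HasDirDeriv f x v (d₁ + d₂)

/-- The normal cone of convex analysis to a convex set `A` at `x`. -/
def normalCone (A : Set (EuclideanSpace ℝ (Fin n))) (x : EuclideanSpace ℝ (Fin n)) :
    Set (EuclideanSpace ℝ (Fin n)) :=
  {xstar | ∀ y ∈ A, ⟪xstar, y - x⟫ ≤ 0}

private lemma normalCone_zero_mem (A : Set (EuclideanSpace ℝ (Fin n)))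
    (x : EuclideanSpace ℝ (Fin n)) : (0 : EuclideanSpace ℝ (Fin n)) ∈ normalCone A x :=
  fun y _ => by simp

private lemma normalCone_smul_mem {A : Set (EuclideanSpace ℝ (Fin n))}
    {x v : EuclideanSpace ℝ (Fin n)} (hv : v ∈ normalCone A x) {t : ℝ} (ht : 0 ≤ t) :
    t • v ∈ normalCone A x := fun y hy => by
  rw [real_inner_smul_left]
  have := hv y hy
  nlinarith

private lemma normalCone_isClosed (A : Set (EuclideanSpace ℝ (Fin n)))
    (x : EuclideanSpace ℝ (Fin n)) : IsClosed (normalCone A x) := by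
  have h : normalCone A x = ⋂ y ∈ A, {v : EuclideanSpace ℝ (Fin n) | ⟪v, y - x⟫ ≤ 0} := by
    ext v
    simp [normalCone]
  rw [h]
  exact isClosed_biInter fun y _ =>
    isClosed_le (continuous_id.inner continuous_const) continuous_const

private lemma normalCone_convex (A : Set (EuclideanSpace ℝ (Fin n)))
    (x : EuclideanSpace ℝ (Fin n)) : Convex ℝ (normalCone A x) := by
  intro v₁ h₁ v₂ h₂ a b ha hb _
  intro y hy
  rw [inner_add_left, real_inner_smul_left, real_inner_smul_left]
  nlinarith [h₁ y hy, h₂ y hy]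

private lemma sep_zero {s : Set (EuclideanSpace ℝ (Fin n))} (hconv : Convex ℝ s)
    (hclosed : IsClosed s) (h0 : (0 : EuclideanSpace ℝ (Fin n)) ∉ s) :
    ∃ w : EuclideanSpace ℝ (Fin n), ∃ u : ℝ, 0 < u ∧ ∀ p ∈ s, u < ⟪w, p⟫ := by
  obtain ⟨f, u, hf0, hfp⟩ := geometric_hahn_banach_point_closed hconv hclosed h0
  refine ⟨(InnerProductSpace.toDual ℝ _).symm f, u, by simpa using hf0, fun p hp => ?_⟩
  rw [InnerProductSpace.toDual_symm_apply]
  exact hfp p hp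

set_option maxHeartbeats 2000000 in
/-- KKT-type optimality conditions in terms of quasidifferentials for an
inequality-constrained problem over a closed convex set
(Theorem `thrm:InequalConstr_OptCond`). -/
theorem quasidiff_kkt_inequality {k : ℕ}
    (f₀ : EuclideanSpace ℝ (Fin n) → ℝ) (g : Fin k → EuclideanSpace ℝ (Fin n) → ℝ)
    (A : Set (EuclideanSpace ℝ (Fin n))) (xbar : EuclideanSpace ℝ (Fin n))
    (A₀ B₀ : Set (EuclideanSpace ℝ (Fin n)))
    (Ag Bg : Fin k → Set (EuclideanSpace ℝ (Fin n)))
    (hA₀c : IsCompact A₀) (hA₀conv : Convex ℝ A₀)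
    (hB₀c : IsCompact B₀) (hB₀conv : Convex ℝ B₀)
    (hAgc : ∀ j, IsCompact (Ag j)) (hAgconv : ∀ j, Convex ℝ (Ag j))
    (hBgc : ∀ j, IsCompact (Bg j)) (hBgconv : ∀ j, Convex ℝ (Bg j))
    (hf₀ : IsQuasidiff f₀ xbar A₀ B₀)
    (hg : ∀ j, IsQuasidiff (g j) xbar (Ag j) (Bg j))
    (hAclosed : IsClosed A) (hAconv : Convex ℝ A) (hxA : xbar ∈ A)
    (hfeas : ∀ j, g j xbar ≤ 0)
    (hmin : ∃ ε > (0 : ℝ), ∀ x ∈ A, (∀ j, g j x ≤ 0) → ‖x - xbar‖ < ε →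
      f₀ xbar ≤ f₀ x)
    (z : Fin k → EuclideanSpace ℝ (Fin n)) (hz : ∀ j, z j ∈ Bg j)
    (hCQ : (0 : EuclideanSpace ℝ (Fin n)) ∉
      convexHull ℝ (⋃ j ∈ {j | g j xbar = 0}, (Ag j + {z j})) + normalCone A xbar) :
    ∀ y₀ ∈ B₀, ∀ z' : Fin k → EuclideanSpace ℝ (Fin n),
      (∀ j, z' j ∈ Bg j) → (∀ j, g j xbar = 0 → z' j = z j) →
      ∃ lam : Fin k → ℝ, (∀ j, 0 ≤ lam j) ∧ (∀ j, lam j * g j xbar = 0) ∧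
        (0 : EuclideanSpace ℝ (Fin n)) ∈
          A₀ + {y₀} + (∑ j, lam j • (Ag j + {z' j})) + normalCone A xbar := by
  classical
  intro y₀ hy₀ z' hz' hz'z
  obtain ⟨ε, hε, hminP⟩ := hmin
  have hA₀ne : A₀.Nonempty := by
    obtain ⟨d₁, d₂, hgr, -, -⟩ := hf₀ 0
    obtain ⟨a, ha, -⟩ := hgr.1
    exact ⟨a, ha⟩
  have hAgne : ∀ j, (Ag j).Nonempty := fun j => by
    obtain ⟨d₁, d₂, hgr, -, -⟩ := hg j 0
    obtain ⟨a, ha, -⟩ := hgr.1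
    exact ⟨a, ha⟩
  set N : Set (EuclideanSpace ℝ (Fin n)) := normalCone A xbar with hN
  set S : Fin (k+1) → Set (EuclideanSpace ℝ (Fin n)) :=
    Fin.cons (A₀ + {y₀}) (fun j => Ag j + {z j}) with hS
  have hSzero : S 0 = A₀ + {y₀} := by rw [hS, Fin.cons_zero]
  have hSsucc : ∀ j : Fin k, S j.succ = Ag j + {z j} := fun j => by rw [hS, Fin.cons_succ]
  have hSconv : ∀ i, Convex ℝ (S i) := by
    intro i
    induction i using Fin.cases with
    | zero => rw [hSzero]; exact hA₀conv.add (convex_singleton y₀)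
    | succ j => rw [hSsucc]; exact (hAgconv j).add (convex_singleton (z j))
  have hScomp : ∀ i, IsCompact (S i) := by
    intro i
    induction i using Fin.cases with
    | zero => rw [hSzero]; exact hA₀c.add isCompact_singleton
    | succ j => rw [hSsucc]; exact (hAgc j).add isCompact_singleton
  have hSne : ∀ i, (S i).Nonempty := by
    intro i
    induction i using Fin.cases with
    | zero => rw [hSzero]; exact ⟨hA₀ne.some + y₀, Set.add_mem_add hA₀ne.some_mem rfl⟩
    | succ j => rw [hSsucc]; exact ⟨(hAgne j).some + z j, Set.add_mem_add (hAgne j).some_mem rfl⟩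
  set W : Set (Fin (k+1) → ℝ) :=
    {μ | (∀ i, 0 ≤ μ i) ∧ ∑ i, μ i = 1 ∧ ∀ j : Fin k, g j xbar ≠ 0 → μ j.succ = 0} with hW
  set C : Set (EuclideanSpace ℝ (Fin n)) :=
    {c | ∃ μ ∈ W, ∃ s : Fin (k+1) → EuclideanSpace ℝ (Fin n),
        (∀ i, s i ∈ S i) ∧ ∑ i, μ i • s i = c} with hC
  -- compactness of C
  have hWcomp : IsCompact W := by
    have hWeq : W = stdSimplex ℝ (Fin (k+1)) ∩
        ⋂ j ∈ {j : Fin k | g j xbar ≠ 0}, {μ : Fin (k+1) → ℝ | μ j.succ = 0} := by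
      ext μ
      simp only [hW, Set.mem_setOf_eq, Set.mem_inter_iff, stdSimplex, Set.mem_iInter]
      tauto
    rw [hWeq]
    exact (isCompact_stdSimplex ℝ (Fin (k+1))).inter_right
      (isClosed_biInter fun j _ => isClosed_eq (continuous_apply _) continuous_const)
  have hCcomp : IsCompact C := by
    have h2 : C = (fun p : (Fin (k+1) → ℝ) × (Fin (k+1) → EuclideanSpace ℝ (Fin n)) =>
        ∑ i, p.1 i • p.2 i) '' (W ×ˢ Set.univ.pi S) := by
      ext c
      constructor
      · rintro ⟨μ, hμ, s, hs, rfl⟩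
        exact ⟨(μ, s), ⟨hμ, by simpa [Set.mem_pi] using fun i => hs i⟩, rfl⟩
      · rintro ⟨⟨μ, s⟩, ⟨hμ, hs⟩, rfl⟩
        exact ⟨μ, hμ, s, fun i => hs i (Set.mem_univ i), rfl⟩
    rw [h2]
    exact (hWcomp.prod (isCompact_univ_pi hScomp)).image
      (continuous_finset_sum _ fun i _ =>
        (((continuous_apply i).comp continuous_fst).smul
          ((continuous_apply i).comp continuous_snd)))
  -- convexity of C
  have hCconv : Convex ℝ C := by
    rintro c₁ ⟨μ, ⟨hμ0, hμ1, hμs⟩, s, hs, rfl⟩ c₂ ⟨μ', ⟨hμ'0, hμ'1, hμ's⟩, s', hs', rfl⟩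
      a b ha hb hab
    set ν : Fin (k+1) → ℝ := fun i => a * μ i + b * μ' i with hν
    have hν0 : ∀ i, 0 ≤ ν i := fun i =>
      add_nonneg (mul_nonneg ha (hμ0 i)) (mul_nonneg hb (hμ'0 i))
    set s'' : Fin (k+1) → EuclideanSpace ℝ (Fin n) := fun i =>
      if h : ν i = 0 then s i
      else (ν i)⁻¹ • ((a * μ i) • s i + (b * μ' i) • s' i) with hs''
    have hterm : ∀ i, ν i • s'' i = (a * μ i) • s i + (b * μ' i) • s' i := by
      intro i
      by_cases h : ν i = 0
      · have hh : a * μ i + b * μ' i = 0 := h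
        have h1 : a * μ i = 0 := by nlinarith [mul_nonneg ha (hμ0 i), mul_nonneg hb (hμ'0 i)]
        have h2 : b * μ' i = 0 := by nlinarith [mul_nonneg ha (hμ0 i), mul_nonneg hb (hμ'0 i)]
        simp [hs'', h, h1, h2]
      · simp only [hs'', dif_neg h]
        rw [smul_smul, mul_inv_cancel₀ h, one_smul]
    have hs''S : ∀ i, s'' i ∈ S i := by
      intro i
      by_cases h : ν i = 0
      · simpa [hs'', h] using hs i
      · simp only [hs'', dif_neg h]
        have hmem := hSconv i (hs i) (hs' i)
          (div_nonneg (mul_nonneg ha (hμ0 i)) (hν0 i))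
          (div_nonneg (mul_nonneg hb (hμ'0 i)) (hν0 i))
          (by field_simp; rfl)
        simpa [smul_add, smul_smul, div_eq_inv_mul] using hmem
    refine ⟨ν, ⟨hν0, ?_, ?_⟩, s'', hs''S, ?_⟩
    · simp only [hν]
      rw [Finset.sum_add_distrib, ← Finset.mul_sum, ← Finset.mul_sum, hμ1, hμ'1]
      simpa using hab
    · intro j hj
      simp [hν, hμs j hj, hμ's j hj]
    · calc ∑ i, ν i • s'' i = ∑ i, ((a * μ i) • s i + (b * μ' i) • s' i) :=
            Finset.sum_congr rfl fun i _ => hterm i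
        _ = a • ∑ i, μ i • s i + b • ∑ i, μ' i • s' i := by
            rw [Finset.sum_add_distrib, Finset.smul_sum, Finset.smul_sum]
            simp_rw [smul_smul]
  -- the S i are contained in C (for admissible i)
  have hsub : ∀ i : Fin (k+1), (i = 0 ∨ ∃ j : Fin k, i = j.succ ∧ g j xbar = 0) →
      S i ⊆ C := by
    intro i hi c hc
    refine ⟨Pi.single i 1, ⟨?_, ?_, ?_⟩,
      Function.update (fun i' => (hSne i').some) i c, ?_, ?_⟩
    · intro i'
      by_cases h : i' = i <;> simp [Pi.single_apply, h]
    · simp [Finset.sum_pi_single']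
    · intro j hj
      have hne : j.succ ≠ i := by
        rcases hi with rfl | ⟨j', rfl, hj'⟩
        · exact Fin.succ_ne_zero j
        · intro hh
          exact hj (by rwa [Fin.succ_inj.mp hh])
      simp [Pi.single_eq_of_ne hne]
    · intro i'
      by_cases h : i' = i
      · subst h; simpa [Function.update_self] using hc
      · simpa [Function.update_of_ne h] using (hSne i').some_mem
    · rw [Finset.sum_eq_single_of_mem i (Finset.mem_univ i)
        (fun i' _ hne => by simp [Pi.single_eq_of_ne hne])]
      simp
  have hC0 : A₀ + {y₀} ⊆ C := by
    have h := hsub 0 (Or.inl rfl)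
    rwa [hSzero] at h
  have hCj : ∀ j : Fin k, g j xbar = 0 → Ag j + {z j} ⊆ C := fun j hj => by
    have h := hsub j.succ (Or.inr ⟨j, rfl, hj⟩)
    rwa [hSsucc] at h
  -- the cone of feasible directions
  set Γ : Set (EuclideanSpace ℝ (Fin n)) :=
    {v | ∃ t : ℝ, 0 ≤ t ∧ ∃ y ∈ A, v = t • (y - xbar)} with hΓ
  have h0Γ : (0 : EuclideanSpace ℝ (Fin n)) ∈ Γ := ⟨0, le_refl 0, xbar, hxA, by simp⟩
  have hΓconv : Convex ℝ Γ := by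
    rintro v₁ ⟨t₁, ht₁, y₁, hy₁, rfl⟩ v₂ ⟨t₂, ht₂, y₂, hy₂, rfl⟩ a b ha hb hab
    rcases eq_or_lt_of_le (add_nonneg (mul_nonneg ha ht₁) (mul_nonneg hb ht₂)) with hs | hs
    · have h1 : a * t₁ = 0 := by nlinarith [mul_nonneg ha ht₁, mul_nonneg hb ht₂]
      have h2 : b * t₂ = 0 := by nlinarith [mul_nonneg ha ht₁, mul_nonneg hb ht₂]
      refine ⟨0, le_refl 0, xbar, hxA, ?_⟩
      rw [smul_smul, smul_smul, h1, h2]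
      simp
    · have hsne : a * t₁ + b * t₂ ≠ 0 := ne_of_gt hs
      refine ⟨a * t₁ + b * t₂, le_of_lt hs,
        (a * t₁ / (a * t₁ + b * t₂)) • y₁ + (b * t₂ / (a * t₁ + b * t₂)) • y₂,
        hAconv hy₁ hy₂ (div_nonneg (mul_nonneg ha ht₁) hs.le)
          (div_nonneg (mul_nonneg hb ht₂) hs.le) (by field_simp), ?_⟩
      have e1 : (a * t₁ + b * t₂) * (a * t₁ / (a * t₁ + b * t₂)) = a * t₁ := by field_simp
      have e2 : (a * t₁ + b * t₂) * (b * t₂ / (a * t₁ + b * t₂)) = b * t₂ := by field_simp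
      simp only [smul_sub, smul_add, smul_smul, e1, e2]
      module
  -- Claim A : nonnegative support on feasible directions
  have claimA : ∀ v ∈ Γ, ∃ c ∈ C, 0 ≤ ⟪c, v⟫ := by
    rintro v ⟨t, ht, y, hy, rfl⟩
    by_contra hcon
    push_neg at hcon
    obtain ⟨d₁, d₂, hgr, hls, hdd⟩ := hf₀ (t • (y - xbar))
    obtain ⟨a₀, ha₀, hda⟩ := hgr.1
    have hc₀C : a₀ + y₀ ∈ C := hC0 (Set.add_mem_add ha₀ rfl)
    have hd2 : d₂ ≤ ⟪y₀, t • (y - xbar)⟫ := hls.2 ⟨y₀, hy₀, rfl⟩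
    have hdneg : d₁ + d₂ < 0 := by
      have h1 := hcon _ hc₀C
      rw [inner_add_left] at h1
      simp only at hda
      linarith
    have Ef : ∀ᶠ α in nhdsWithin (0:ℝ) (Set.Ioi 0),
        f₀ (xbar + α • (t • (y - xbar))) < f₀ xbar := by
      have h1 := hdd.eventually_lt_const hdneg
      filter_upwards [h1, self_mem_nhdsWithin] with α hα hαpos
      have hαp : (0:ℝ) < α := hαpos
      rcases div_neg_iff.mp hα with ⟨h, h'⟩ | ⟨h, h'⟩ <;> linarith
    have Eg : ∀ j : Fin k, ∀ᶠ α in nhdsWithin (0:ℝ) (Set.Ioi 0),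
        g j (xbar + α • (t • (y - xbar))) < 0 := by
      intro j
      obtain ⟨e₁, e₂, hgrj, hlsj, hddj⟩ := hg j (t • (y - xbar))
      by_cases hj : g j xbar = 0
      · obtain ⟨aj, haj, hea⟩ := hgrj.1
        have hcjC : aj + z j ∈ C := hCj j hj (Set.add_mem_add haj rfl)
        have he2 : e₂ ≤ ⟪z j, t • (y - xbar)⟫ := hlsj.2 ⟨z j, hz j, rfl⟩
        have heneg : e₁ + e₂ < 0 := by
          have h2 := hcon _ hcjC
          rw [inner_add_left] at h2
          simp only at hea
          linarith
        have h1 := hddj.eventually_lt_const heneg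
        filter_upwards [h1, self_mem_nhdsWithin] with α hα hαpos
        have hαp : (0:ℝ) < α := hαpos
        rw [hj, sub_zero] at hα
        rcases div_neg_iff.mp hα with ⟨h, h'⟩ | ⟨h, h'⟩ <;> linarith
      · have hjlt : g j xbar < 0 := lt_of_le_of_ne (hfeas j) hj
        have htend : Tendsto (fun α : ℝ => g j xbar +
            α * ((g j (xbar + α • (t • (y - xbar))) - g j xbar) / α))
            (nhdsWithin (0:ℝ) (Set.Ioi 0)) (nhds (g j xbar + 0 * (e₁ + e₂))) :=
          tendsto_const_nhds.add (((tendsto_id.mono_left nhdsWithin_le_nhds)).mul hddj)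
        rw [zero_mul, add_zero] at htend
        have h1 := htend.eventually_lt_const hjlt
        filter_upwards [h1, self_mem_nhdsWithin] with α hα hαpos
        have hαne : (α:ℝ) ≠ 0 := ne_of_gt hαpos
        have heq : g j xbar + α * ((g j (xbar + α • (t • (y - xbar))) - g j xbar) / α)
            = g j (xbar + α • (t • (y - xbar))) := by
          field_simp; ring
        rwa [heq] at hα
    have EA : ∀ᶠ α in nhdsWithin (0:ℝ) (Set.Ioi 0),
        xbar + α • (t • (y - xbar)) ∈ A := by
      have ht1 : (0:ℝ) < t + 1 := by linarith
      have h1 : ∀ᶠ α in nhds (0:ℝ), α < (t+1)⁻¹ := Iio_mem_nhds (by positivity)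
      filter_upwards [h1.filter_mono nhdsWithin_le_nhds, self_mem_nhdsWithin] with α h1 h2
      have hαp : (0:ℝ) < α := h2
      rw [smul_smul]
      refine hAconv.add_smul_sub_mem hxA hy ⟨by positivity, ?_⟩
      have h3 : α * (t+1) < (t+1)⁻¹ * (t+1) := by
        exact mul_lt_mul_of_pos_right h1 ht1
      rw [inv_mul_cancel₀ (ne_of_gt ht1)] at h3
      nlinarith
    have En : ∀ᶠ α in nhdsWithin (0:ℝ) (Set.Ioi 0),
        ‖(xbar + α • (t • (y - xbar))) - xbar‖ < ε := by
      have hM : (0:ℝ) ≤ ‖t • (y - xbar)‖ := norm_nonneg _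
      have h1 : ∀ᶠ α in nhds (0:ℝ), α < ε / (‖t • (y - xbar)‖ + 1) :=
        Iio_mem_nhds (by positivity)
      filter_upwards [h1.filter_mono nhdsWithin_le_nhds, self_mem_nhdsWithin] with α h1 h2
      have hαp : (0:ℝ) < α := h2
      rw [add_sub_cancel_left, norm_smul, Real.norm_eq_abs, abs_of_pos hαp]
      have h3 : α * (‖t • (y - xbar)‖ + 1) < ε := by
        have h4 := (lt_div_iff₀ (by positivity :
            (0:ℝ) < ‖t • (y - xbar)‖ + 1)).mp h1
        linarith
      nlinarith
    have Eall : ∀ᶠ α in nhdsWithin (0:ℝ) (Set.Ioi 0),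
        (∀ j, g j (xbar + α • (t • (y - xbar))) < 0) := eventually_all.mpr Eg
    obtain ⟨α, hf, hgall, hmem, hnorm⟩ := (Ef.and (Eall.and (EA.and En))).exists
    exact absurd (hminP _ hmem (fun j => (hgall j).le) hnorm) (not_le.mpr hf)
  -- normal cone basics
  have hNzero : (0 : EuclideanSpace ℝ (Fin n)) ∈ N := normalCone_zero_mem A xbar
  have hNclosed : IsClosed N := normalCone_isClosed A xbar
  have hNconv : Convex ℝ N := normalCone_convex A xbar
  -- Claim B : 0 ∈ C + N
  have claimB : (0 : EuclideanSpace ℝ (Fin n)) ∈ C + N := by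
    by_contra h0
    obtain ⟨w, u, hu, hwp⟩ := sep_zero (hCconv.add hNconv)
      (hNclosed.add_left_of_isCompact hCcomp) h0
    obtain ⟨c₀, hc₀⟩ : C.Nonempty := ⟨_, hC0 (Set.add_mem_add hA₀ne.some_mem rfl)⟩
    have hc₀w : u < ⟪w, c₀⟫ := by
      have h := hwp _ (Set.add_mem_add hc₀ hNzero)
      simpa using h
    have hwN : ∀ ν ∈ N, 0 ≤ ⟪w, ν⟫ := by
      intro ν hν
      by_contra hneg
      push_neg at hneg
      have hsneg : ⟪w, ν⟫ < 0 := hneg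
      set τ := (⟪w, c₀⟫ - u + 1) / (-⟪w, ν⟫) with hτ
      have hτ0 : 0 ≤ τ := div_nonneg (by linarith) (by linarith)
      have hmem2 : c₀ + τ • ν ∈ C + N :=
        Set.add_mem_add hc₀ (normalCone_smul_mem hν hτ0)
      have h2 := hwp _ hmem2
      rw [inner_add_right, real_inner_smul_right] at h2
      have hsne : ⟪w, ν⟫ ≠ 0 := ne_of_lt hsneg
      have hτν : τ * ⟪w, ν⟫ = -(⟪w, c₀⟫ - u + 1) := by
        rw [hτ]
        calc (⟪w, c₀⟫ - u + 1) / (-⟪w, ν⟫) * ⟪w, ν⟫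
            = -((⟪w, c₀⟫ - u + 1) / (-⟪w, ν⟫) * (-⟪w, ν⟫)) := by ring
          _ = -(⟪w, c₀⟫ - u + 1) := by rw [div_mul_cancel₀ _ (neg_ne_zero.mpr hsne)]
      linarith
    have hvΓ : -w ∈ closure Γ := by
      by_contra hvc
      obtain ⟨f', u', hfa, hfv⟩ :=
        geometric_hahn_banach_closed_point hΓconv.closure isClosed_closure hvc
      have h5 : (0:ℝ) < u' := by simpa using hfa 0 (subset_closure h0Γ)
      have hw'N : ((InnerProductSpace.toDual ℝ _).symm f' : EuclideanSpace ℝ (Fin n)) ∈ N := by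
        intro y hy
        rw [InnerProductSpace.toDual_symm_apply]
        by_contra hpos
        push_neg at hpos
        set τ := (u' + 1) / (f' (y - xbar)) with hτ
        have hτ0 : 0 ≤ τ := div_nonneg (by linarith) hpos.le
        have hmem3 : τ • (y - xbar) ∈ Γ := ⟨τ, hτ0, y, hy, rfl⟩
        have h3 := hfa _ (subset_closure hmem3)
        rw [map_smul, smul_eq_mul] at h3
        have h4 : τ * f' (y - xbar) = u' + 1 := by
          rw [hτ]
          exact div_mul_cancel₀ _ (ne_of_gt hpos)
        linarith
      have h4 := hwN _ hw'N
      have h6 : ⟪((InnerProductSpace.toDual ℝ _).symm f' : EuclideanSpace ℝ (Fin n)), -w⟫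
          = f' (-w) := InnerProductSpace.toDual_symm_apply
      rw [inner_neg_right, real_inner_comm] at h6
      have h7 : f' (-w) ≤ 0 := by rw [← h6]; linarith
      linarith [hfv]
    obtain ⟨xs, hxsΓ, hxslim⟩ := mem_closure_iff_seq_limit.mp hvΓ
    choose cs hcsC hcs0 using fun m => claimA (xs m) (hxsΓ m)
    obtain ⟨c, hcC, φ, hφ, hclim⟩ := hCcomp.tendsto_subseq hcsC
    have hlim2 : Tendsto (fun m => ⟪cs (φ m), xs (φ m)⟫) atTop (nhds ⟪c, -w⟫) :=
      hclim.inner (hxslim.comp hφ.tendsto_atTop)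
    have h6 : 0 ≤ ⟪c, -w⟫ :=
      le_of_tendsto_of_tendsto' tendsto_const_nhds hlim2 fun m => hcs0 (φ m)
    have h7 : u < ⟪w, c⟫ := by
      have h := hwp _ (Set.add_mem_add hcC hNzero)
      simpa using h
    rw [inner_neg_right, real_inner_comm] at h6
    linarith
  -- decompose
  rw [Set.mem_add] at claimB
  obtain ⟨c, hcC, ν, hν, h0eq⟩ := claimB
  obtain ⟨μ, ⟨hμ0, hμ1, hμsupp⟩, s, hsS, hsum⟩ := hcC
  by_cases hμz : μ 0 = 0
  · exfalso
    apply hCQ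
    have hsum1 : ∑ i ∈ Finset.univ.filter (fun i : Fin (k+1) => μ i ≠ 0), μ i = 1 := by
      rw [Finset.sum_filter_of_ne (fun i _ h => h)]
      exact hμ1
    have hsum2 : ∑ i ∈ Finset.univ.filter (fun i : Fin (k+1) => μ i ≠ 0), μ i • s i = c := by
      rw [Finset.sum_filter_of_ne (fun i _ h => ?_)]
      · exact hsum
      · intro hz2
        exact h (by simp [hz2])
    have hc_hull : c ∈ convexHull ℝ (⋃ j ∈ {j | g j xbar = 0}, (Ag j + {z j})) := by
      have hcm : (Finset.univ.filter (fun i : Fin (k+1) => μ i ≠ 0)).centerMass μ s = c := by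
        rw [Finset.centerMass, hsum1, inv_one, one_smul, hsum2]
      rw [← hcm]
      refine Finset.centerMass_mem_convexHull _ (fun i _ => hμ0 i) (by rw [hsum1]; norm_num)
        (fun i hi => ?_)
      rw [Finset.mem_filter] at hi
      have hine : i ≠ 0 := fun h => hi.2 (h ▸ hμz)
      obtain ⟨j, hj⟩ := Fin.exists_succ_eq.mpr hine
      have hgj : g j xbar = 0 := by
        by_contra hne
        exact hi.2 (hj ▸ hμsupp j hne)
      subst hj
      refine Set.mem_biUnion hgj ?_
      have h := hsS j.succ
      rwa [hSsucc] at h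
    exact h0eq ▸ Set.add_mem_add hc_hull hν
  · have hμpos : 0 < μ 0 := lt_of_le_of_ne (hμ0 0) (Ne.symm hμz)
    refine ⟨fun j => μ j.succ / μ 0, fun j => div_nonneg (hμ0 j.succ) hμpos.le, ?_, ?_⟩
    · intro j
      show μ j.succ / μ 0 * g j xbar = 0
      by_cases hj : g j xbar = 0
      · rw [hj, mul_zero]
      · rw [hμsupp j hj, zero_div, zero_mul]
    · set s'' : Fin k → EuclideanSpace ℝ (Fin n) := fun j : Fin k =>
        if g j xbar = 0 then s j.succ else (hAgne j).some + z' j with hs''def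
      have hs''mem : ∀ j, s'' j ∈ Ag j + {z' j} := by
        intro j
        by_cases hj : g j xbar = 0
        · simp only [hs''def, if_pos hj]
          have h := hsS j.succ
          rw [hSsucc] at h
          rwa [hz'z j hj]
        · simp only [hs''def, if_neg hj]
          exact Set.add_mem_add (hAgne j).some_mem rfl
      have hp : ∑ j, (μ j.succ / μ 0) • s'' j ∈ ∑ j, (μ j.succ / μ 0) • (Ag j + {z' j}) :=
        Set.finset_sum_mem_finset_sum _ _ _
          (fun j _ => Set.smul_mem_smul_set (hs''mem j))
      have hs0mem : s 0 ∈ A₀ + {y₀} := by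
        have h := hsS 0
        rwa [hSzero] at h
      have hν' : (μ 0)⁻¹ • ν ∈ N := normalCone_smul_mem hν (inv_nonneg.mpr (hμ0 0))
      have hkey : s 0 + (∑ j, (μ j.succ / μ 0) • s'' j) + (μ 0)⁻¹ • ν = 0 := by
        have e1 : ∀ j : Fin k, (μ j.succ / μ 0) • s'' j
            = (μ 0)⁻¹ • (μ j.succ • s j.succ) := by
          intro j
          by_cases hj : g j xbar = 0
          · simp only [hs''def, if_pos hj]
            rw [smul_smul, div_eq_inv_mul]
          · rw [hμsupp j hj]
            simp
        have hP : (∑ j, (μ j.succ / μ 0) • s'' j)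
            = (μ 0)⁻¹ • ∑ j : Fin k, μ j.succ • s j.succ := by
          rw [Finset.smul_sum]
          exact Finset.sum_congr rfl fun j _ => e1 j
        have hc0 : c = μ 0 • s 0 + ∑ j : Fin k, μ j.succ • s j.succ := by
          rw [← hsum, Fin.sum_univ_succ]
        have hν2 : ν = -c := eq_neg_of_add_eq_zero_right h0eq
        rw [hP, hν2, hc0, smul_neg, smul_add, smul_smul,
          inv_mul_cancel₀ hμz, one_smul]
        abel
      exact hkey ▸ Set.add_mem_add (Set.add_mem_add hs0mem hp) hν'
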